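/- arXiv:1209.3562 — 4 statements merged into one kernel-verified Lean document; each statement's English description precedes it below -/
import Mathlib

section
/- The shift homomorphism T : B_∞ → B_∞ is injective. -/
/-!
With `δ_m = σ_1 σ_2 ⋯ σ_{m-1}`, the braid relations give `δ_m σ_i δ_m⁻¹ = σ_{i+1}` for
`i ≤ m - 2`. Every braid involves only finitely many generators, so on it the shift agrees with
conjugation by `δ_m` for all large `m`; conjugation is injective, hence so is the shift.
-/

/-!
Generators are 0-indexed: the generator of index `i` represents `σ_{i+1}`
of the braid group presentation.
-/

/-- Relators of the infinite braid group `B_∞`: generator `i : ℕ` represents `σ_{i+1}`. -/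
def braidRelsInf : Set (FreeGroup ℕ) :=
  {r | (∃ i j : ℕ, i + 2 ≤ j ∧
          r = FreeGroup.of i * FreeGroup.of j * (FreeGroup.of i)⁻¹ * (FreeGroup.of j)⁻¹) ∨
       (∃ i : ℕ,
          r = FreeGroup.of i * FreeGroup.of (i + 1) * FreeGroup.of i *
              (FreeGroup.of (i + 1))⁻¹ * (FreeGroup.of i)⁻¹ * (FreeGroup.of (i + 1))⁻¹)}

/-- The infinite braid group `B_∞`. -/
def BInf : Type := PresentedGroup braidRelsInf

instance : Group BInf := by unfold BInf; infer_instance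

/-- `iσ i` is the generator `σ_{i+1}` of `B_∞` (0-indexed, so `iσ 0 = σ_1`). -/
def iσ (i : ℕ) : BInf := PresentedGroup.of i

namespace BInf

open Filter

theorem iσ_commute {i j : ℕ} (h : i + 2 ≤ j) : Commute (iσ i) (iσ j) :=
  PresentedGroup.mk_eq_mk_of_mul_inv_mem (Or.inl ⟨i, j, h, by group⟩)

theorem iσ_braid (i : ℕ) :
    iσ i * iσ (i + 1) * iσ i = iσ (i + 1) * iσ i * iσ (i + 1) :=
  PresentedGroup.mk_eq_mk_of_mul_inv_mem (Or.inr ⟨i, by group⟩)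

/-- `delta m = σ_1 σ_2 ⋯ σ_m`, i.e. `δ_{m+1}`. -/
def delta (m : ℕ) : BInf := ((List.range m).map iσ).prod

theorem delta_succ (m : ℕ) : delta (m + 1) = delta m * iσ m := by
  simp [delta, List.range_succ]

theorem iσ_commute_delta {j m : ℕ} (h : m < j) : Commute (iσ j) (delta m) :=
  Commute.list_prod_right _ _ fun _ hx => by
    obtain ⟨i, hi, rfl⟩ := List.mem_map.mp hx
    exact (iσ_commute (by grind)).symm

theorem delta_mul_iσ {i m : ℕ} (h : i + 2 ≤ m) : delta m * iσ i = iσ (i + 1) * delta m := by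
  induction m, h using Nat.le_induction with
  | base =>
    calc delta (i + 2) * iσ i = delta i * (iσ i * iσ (i + 1) * iσ i) := by
          simp only [delta_succ, mul_assoc]
      _ = iσ (i + 1) * delta (i + 2) := by
          rw [iσ_braid, ← mul_assoc, ← mul_assoc, ← (iσ_commute_delta (by omega)).eq]
          simp only [delta_succ, mul_assoc]
  | succ m hm ih =>
    rw [delta_succ, mul_assoc, ← (iσ_commute (by omega)).eq, ← mul_assoc, ih, mul_assoc]

theorem eventually_shift_eq_conj_delta (T : BInf →* BInf)
    (hT : ∀ i : ℕ, T (iσ i) = iσ (i + 1)) (g : BInf) :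
    ∀ᶠ m in atTop, T g = MulAut.conj (delta m) g := by
  have hg : g ∈ Subgroup.closure (Set.range iσ) :=
    PresentedGroup.closure_range_of braidRelsInf ▸ Subgroup.mem_top g
  induction hg using Subgroup.closure_induction with
  | mem x hx =>
    obtain ⟨i, rfl⟩ := hx
    filter_upwards [eventually_ge_atTop (i + 2)] with m hm
    rw [hT, MulAut.conj_apply, delta_mul_iσ hm, mul_inv_cancel_right]
  | one => exact .of_forall fun m => by simp
  | mul x y _ _ hx hy =>
    filter_upwards [hx, hy] with m hxm hym
    rw [map_mul, map_mul, hxm, hym]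
  | inv x _ hx =>
    filter_upwards [hx] with m hm
    rw [map_inv, map_inv, hm]

end BInf

/-- The shift homomorphism `T : B_∞ → B_∞`, determined by `T (σ_i) = σ_{i+1}`
for all `i ≥ 1`, is injective. -/
theorem shift_injective (T : BInf →* BInf) (hT : ∀ i : ℕ, T (iσ i) = iσ (i + 1)) :
    Function.Injective T := by
  rw [injective_iff_map_eq_one]
  intro g hg
  obtain ⟨m, hm⟩ := (BInf.eventually_shift_eq_conj_delta T hT g).exists
  rwa [hg, eq_comm, MulEquiv.map_eq_one_iff] at hm
end

section
/- The equivalence relations ~ and ≅ on the set 𝓑 = {(b, m) : m ≥ 2, b ∈ B_m} coincide; that is, the equivalence relation generated by conjugation together with the right-stabilization moves (b, m) ∼ (σ_m·b, m+1) and (b, m) ∼ (σ_m^{−1}·b, m+1) equals the equivalence relation generated by conjugation together with the left-stabilization moves (b, m) ≅ (σ_1·sh_m(b), m+1) and (b, m) ≅ (σ_1^{−1}·sh_m(b), m+1). -/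
/-- Relators of a braid group on generators indexed by `Fin m`;
the generator of index `i` represents `σ_{i+1}` (0-indexed). -/
def braidRels (m : ℕ) : Set (FreeGroup (Fin m)) :=
  {r | (∃ i j : Fin m, (i : ℕ) + 2 ≤ (j : ℕ) ∧
          r = FreeGroup.of i * FreeGroup.of j * (FreeGroup.of i)⁻¹ * (FreeGroup.of j)⁻¹) ∨
       (∃ i j : Fin m, (j : ℕ) = (i : ℕ) + 1 ∧
          r = FreeGroup.of i * FreeGroup.of j * FreeGroup.of i *
              (FreeGroup.of j)⁻¹ * (FreeGroup.of i)⁻¹ * (FreeGroup.of j)⁻¹)}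

/-- The braid group `B_n`, presented with generators `σ_1, …, σ_{n-1}`. -/
def BraidGroup (n : ℕ) : Type := PresentedGroup (braidRels (n - 1))

instance (n : ℕ) : Group (BraidGroup n) := by unfold BraidGroup; infer_instance

/-- `bσ k` is the generator `σ_{k+1}` of `B_n` (0-indexed, so `bσ 0 = σ_1`). -/
def bσ {n : ℕ} (k : Fin (n - 1)) : BraidGroup n := PresentedGroup.of k

/-- The set `𝓑` of pairs `(b, m)` with `m ≥ 2` and `b ∈ B_m`, encoded as
`⟨k, b⟩` with `b ∈ B_{k+2}`. -/
def BB : Type := (k : ℕ) × BraidGroup (k + 2)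

/-- The generating moves of the Markov equivalence `~`: conjugation, and the
right-stabilizations `(b, m) ~ (σ_m^{±1} · i_m b, m+1)`.  Here `ι k` is the
inclusion `B_{k+2} → B_{k+3}`, and `σ_m` (with `m = k+2`) is the 0-indexed
generator of index `m - 1 = k + 1` of `B_{k+3}`. -/
def markovMove (ι : ∀ k : ℕ, BraidGroup (k + 2) →* BraidGroup (k + 3)) :
    BB → BB → Prop := fun x y =>
  (∃ a : BraidGroup (x.1 + 2), y = ⟨x.1, a * x.2 * a⁻¹⟩) ∨
  y = ⟨x.1 + 1, bσ (⟨x.1 + 1, by omega⟩ : Fin (x.1 + 3 - 1)) * ι x.1 x.2⟩ ∨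
  y = ⟨x.1 + 1, (bσ (⟨x.1 + 1, by omega⟩ : Fin (x.1 + 3 - 1)))⁻¹ * ι x.1 x.2⟩

/-- The generating moves of the relation `≅`: conjugation, and the
left-stabilizations `(b, m) ≅ (σ_1^{±1} · sh_m b, m+1)`.  Here `sh k` is the
shift `B_{k+2} → B_{k+3}` with `σ_j ↦ σ_{j+1}`, and `σ_1` is the 0-indexed
generator of index `0`. -/
def mirrorMove (sh : ∀ k : ℕ, BraidGroup (k + 2) →* BraidGroup (k + 3)) :
    BB → BB → Prop := fun x y =>
  (∃ a : BraidGroup (x.1 + 2), y = ⟨x.1, a * x.2 * a⁻¹⟩) ∨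
  y = ⟨x.1 + 1, bσ (⟨0, by omega⟩ : Fin (x.1 + 3 - 1)) * sh x.1 x.2⟩ ∨
  y = ⟨x.1 + 1, (bσ (⟨0, by omega⟩ : Fin (x.1 + 3 - 1)))⁻¹ * sh x.1 x.2⟩

/-
Write `δ_n = σ_1 σ_2 ⋯ σ_{n-1} ∈ B_n`. Conjugation by `δ_{m+1}` sends `σ_i` to `σ_{i+1}` for
`i < m`, so it carries `i_m(b)` to `sh_m(b)`. Put `g = sh_m(δ_m) · δ_{m+1}`. Since
`δ_{m+1} = i_m(δ_m) σ_m = σ_1 sh_m(δ_m)`, both `g σ_m` and `σ_1 g` equal `δ_{m+1}²`, so `g`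
conjugates `σ_m` to `σ_1`, and it carries `i_m(b)` to `sh_m(δ_m b δ_m⁻¹)`. Hence the right
stabilization `σ_m^{±1} i_m(b)` is conjugate to the left stabilization of `δ_m b δ_m⁻¹`, and
conversely every left stabilization is conjugate to a right stabilization of a conjugate.
-/

theorem SemiconjBy.list_prod_range_of_braid {G : Type*} [Group G] {s : ℕ → G}
    (hcomm : ∀ i j, i + 2 ≤ j → Commute (s i) (s j)) {j : ℕ}
    (hbraid : s j * s (j + 1) * s j = s (j + 1) * s j * s (j + 1)) {t : ℕ} (ht : j + 2 ≤ t) :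
    SemiconjBy ((List.range t).map s).prod (s j) (s (j + 1)) := by
  induction t, ht using Nat.le_induction with
  | base =>
    set P := ((List.range j).map s).prod
    have hP : Commute P (s (j + 1)) :=
      Commute.list_prod_left _ _ fun x hx => by
        obtain ⟨i, hi, rfl⟩ := List.mem_map.mp hx
        exact hcomm i (j + 1) (by have := List.mem_range.mp hi; omega)
    simp only [SemiconjBy, List.range_succ, List.map_append, List.prod_append,
      List.map_singleton, List.prod_singleton]
    calc P * s j * s (j + 1) * s j = P * (s j * s (j + 1) * s j) := by simp only [mul_assoc]
      _ = P * s (j + 1) * (s j * s (j + 1)) := by rw [hbraid]; simp only [mul_assoc]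
      _ = s (j + 1) * (P * s j * s (j + 1)) := by rw [hP.eq]; simp only [mul_assoc]
  | succ t ht ih =>
    rw [List.range_succ, List.map_append, List.prod_append, List.map_singleton,
      List.prod_singleton]
    exact ih.mul_left (hcomm j t ht).symm

namespace BraidGroup

/-- `gen n i` is `σ_{i+1}` when `i < n - 1` and `1` otherwise. -/
def gen (n i : ℕ) : BraidGroup n := if h : i < n - 1 then bσ ⟨i, h⟩ else 1

theorem gen_of_lt {n i : ℕ} (h : i < n - 1) : gen n i = bσ ⟨i, h⟩ := dif_pos h

theorem gen_of_le {n i : ℕ} (h : n - 1 ≤ i) : gen n i = 1 := dif_neg (by omega)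

theorem commute_bσ {n : ℕ} {i j : Fin (n - 1)} (h : (i : ℕ) + 2 ≤ j) :
    Commute (bσ i) (bσ j) := by
  have hrel := PresentedGroup.one_of_mem (rels := braidRels (n - 1))
    (x := .of i * .of j * (.of i)⁻¹ * (.of j)⁻¹) (Or.inl ⟨i, j, h, rfl⟩)
  simp only [map_mul, map_inv, mul_inv_eq_iff_eq_mul, one_mul] at hrel
  exact hrel

theorem bσ_braid {n : ℕ} {i j : Fin (n - 1)} (h : (j : ℕ) = i + 1) :
    bσ i * bσ j * bσ i = bσ j * bσ i * bσ j := by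
  have hrel := PresentedGroup.one_of_mem (rels := braidRels (n - 1))
    (x := .of i * .of j * .of i * (.of j)⁻¹ * (.of i)⁻¹ * (.of j)⁻¹) (Or.inr ⟨i, j, h, rfl⟩)
  simp only [map_mul, map_inv, mul_inv_eq_iff_eq_mul, one_mul] at hrel
  exact hrel

theorem commute_gen (n : ℕ) {i j : ℕ} (h : i + 2 ≤ j) : Commute (gen n i) (gen n j) := by
  by_cases hj : j < n - 1
  · rw [gen_of_lt (by omega), gen_of_lt hj]
    exact commute_bσ h
  · rw [gen_of_le (n := n) (i := j) (by omega)]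
    exact Commute.one_right _

theorem gen_braid (n : ℕ) {i : ℕ} (h : i + 1 < n - 1) :
    gen n i * gen n (i + 1) * gen n i = gen n (i + 1) * gen n i * gen n (i + 1) := by
  rw [gen_of_lt (by omega), gen_of_lt h]
  exact bσ_braid rfl

def delta (n : ℕ) : BraidGroup n := ((List.range (n - 1)).map (gen n)).prod

theorem semiconjBy_delta_gen {n j : ℕ} (h : j + 2 ≤ n - 1) :
    SemiconjBy (delta n) (gen n j) (gen n (j + 1)) :=
  .list_prod_range_of_braid (fun _ _ => commute_gen n) (gen_braid n (by omega)) h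

def IsInclusion (ι : ∀ k : ℕ, BraidGroup (k + 2) →* BraidGroup (k + 3)) : Prop :=
  ∀ (k : ℕ) (j : Fin (k + 1)), ι k (bσ j) = bσ (⟨j, by omega⟩ : Fin (k + 3 - 1))

def IsShift (sh : ∀ k : ℕ, BraidGroup (k + 2) →* BraidGroup (k + 3)) : Prop :=
  ∀ (k : ℕ) (j : Fin (k + 1)), sh k (bσ j) = bσ (j.succ : Fin (k + 3 - 1))

variable {ι sh : ∀ k : ℕ, BraidGroup (k + 2) →* BraidGroup (k + 3)}

theorem IsInclusion.map_gen (hι : IsInclusion ι) {k i : ℕ} (h : i ≤ k) :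
    ι k (gen (k + 2) i) = gen (k + 3) i := by
  rw [gen_of_lt (by omega), gen_of_lt (by omega)]
  exact hι k ⟨i, by omega⟩

theorem IsShift.map_gen (hsh : IsShift sh) (k i : ℕ) :
    sh k (gen (k + 2) i) = gen (k + 3) (i + 1) := by
  by_cases hi : i < k + 1
  · rw [gen_of_lt (by omega), gen_of_lt (by omega)]
    exact hsh k ⟨i, hi⟩
  · rw [gen_of_le (by omega), gen_of_le (by omega), map_one]

theorem IsInclusion.delta_succ (hι : IsInclusion ι) (k : ℕ) :
    delta (k + 3) = ι k (delta (k + 2)) * gen (k + 3) (k + 1) := by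
  simp only [delta, map_list_prod, List.map_map]
  rw [show k + 3 - 1 = k + 1 + 1 from rfl, List.range_succ, List.map_append, List.prod_append,
    List.map_singleton, List.prod_singleton]
  congr 2
  exact List.map_congr_left fun i hi =>
    (hι.map_gen (Nat.le_of_lt_succ (List.mem_range.mp hi))).symm

theorem IsShift.delta_succ (hsh : IsShift sh) (k : ℕ) :
    delta (k + 3) = gen (k + 3) 0 * sh k (delta (k + 2)) := by
  simp only [delta, map_list_prod, List.map_map]
  rw [show k + 3 - 1 = k + 1 + 1 from rfl, List.range_succ_eq_map, List.map_cons,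
    List.prod_cons, List.map_map]
  congr 2
  exact List.map_congr_left fun i _ => (hsh.map_gen k i).symm

theorem semiconjBy_delta_inclusion_shift (hι : IsInclusion ι) (hsh : IsShift sh) {k : ℕ}
    (b : BraidGroup (k + 2)) : SemiconjBy (delta (k + 3)) (ι k b) (sh k b) := by
  have hconj : (MulAut.conj (delta (k + 3))).toMonoidHom.comp (ι k) = sh k := by
    refine PresentedGroup.ext fun j => ?_
    have hj : (j : ℕ) + 2 ≤ k + 2 := by have := j.isLt; omega
    have hι_j : ι k (bσ j) = gen (k + 3) j := (hι k j).trans (gen_of_lt _).symm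
    have hsh_j : sh k (bσ j) = gen (k + 3) (j + 1) := (hsh k j).trans (gen_of_lt _).symm
    change delta (k + 3) * ι k (bσ j) * (delta (k + 3))⁻¹ = sh k (bσ j)
    rw [hι_j, hsh_j, (semiconjBy_delta_gen hj).eq, mul_inv_cancel_right]
  rw [SemiconjBy, ← hconj]
  simp

def twist (sh : ∀ k : ℕ, BraidGroup (k + 2) →* BraidGroup (k + 3)) (k : ℕ) :
    BraidGroup (k + 3) :=
  sh k (delta (k + 2)) * delta (k + 3)

theorem semiconjBy_twist_inclusion_shift (hι : IsInclusion ι) (hsh : IsShift sh) {k : ℕ}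
    {b c : BraidGroup (k + 2)} (h : SemiconjBy (delta (k + 2)) b c) :
    SemiconjBy (twist sh k) (ι k b) (sh k c) :=
  (h.map (sh k)).mul_left (semiconjBy_delta_inclusion_shift hι hsh b)

theorem semiconjBy_twist_bσ (hι : IsInclusion ι) (hsh : IsShift sh) (k : ℕ) :
    SemiconjBy (twist sh k) (bσ (⟨k + 1, by omega⟩ : Fin (k + 3 - 1)))
      (bσ (⟨0, by omega⟩ : Fin (k + 3 - 1))) := by
  rw [← gen_of_lt, ← gen_of_lt]
  have hsquare_right : delta (k + 3) * delta (k + 3)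
      = twist sh k * gen (k + 3) (k + 1) := by
    nth_rewrite 2 [hι.delta_succ k]
    rw [← mul_assoc, (semiconjBy_delta_inclusion_shift hι hsh _).eq, twist]
  have hsquare_left : delta (k + 3) * delta (k + 3)
      = gen (k + 3) 0 * twist sh k := by
    nth_rewrite 1 [hsh.delta_succ k]
    rw [twist, mul_assoc]
  rw [SemiconjBy, ← hsquare_right, hsquare_left]

end BraidGroup

open BraidGroup

theorem eqvGen_of_semiconjBy_of_rel {r : BB → BB → Prop}
    (hr : ∀ k (a b : BraidGroup (k + 2)), r ⟨k, b⟩ ⟨k, a * b * a⁻¹⟩) {k l : ℕ}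
    {a₁ b c : BraidGroup (k + 2)} {a₂ d e : BraidGroup (l + 2)}
    (hbc : SemiconjBy a₁ b c) (hcd : r ⟨k, c⟩ ⟨l, d⟩) (hed : SemiconjBy a₂ e d) :
    Relation.EqvGen r ⟨k, b⟩ ⟨l, e⟩ := by
  have hb := hr k a₁ b
  have he := hr l a₂ e
  rw [← eq_mul_inv_of_mul_eq hbc.symm] at hb
  rw [← eq_mul_inv_of_mul_eq hed.symm] at he
  exact .trans _ _ _ (.rel _ _ hb) (.trans _ _ _ (.rel _ _ hcd) (.symm _ _ (.rel _ _ he)))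

section Stabilization

variable {ι sh : ∀ k : ℕ, BraidGroup (k + 2) →* BraidGroup (k + 3)}

theorem markovMove_le_eqvGen_mirrorMove (hι : IsInclusion ι) (hsh : IsShift sh) :
    markovMove ι ≤ Relation.EqvGen (mirrorMove sh) := by
  have hr : ∀ k (a b : BraidGroup (k + 2)), mirrorMove sh ⟨k, b⟩ ⟨k, a * b * a⁻¹⟩ :=
    fun _ a _ => Or.inl ⟨a, rfl⟩
  rintro ⟨k, b⟩ y hy
  have hconj : SemiconjBy (twist sh k) (ι k b) (sh k (delta (k + 2) * b * (delta (k + 2))⁻¹)) :=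
    semiconjBy_twist_inclusion_shift hι hsh (.conj_mk _ b)
  rcases hy with ⟨a, rfl⟩ | rfl | rfl
  · exact .rel _ _ (hr k a b)
  · exact eqvGen_of_semiconjBy_of_rel hr (.conj_mk _ b) (Or.inr (Or.inl rfl))
      ((semiconjBy_twist_bσ hι hsh k).mul_right hconj)
  · exact eqvGen_of_semiconjBy_of_rel hr (.conj_mk _ b) (Or.inr (Or.inr rfl))
      ((semiconjBy_twist_bσ hι hsh k).inv_right.mul_right hconj)

theorem mirrorMove_le_eqvGen_markovMove (hι : IsInclusion ι) (hsh : IsShift sh) :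
    mirrorMove sh ≤ Relation.EqvGen (markovMove ι) := by
  have hr : ∀ k (a b : BraidGroup (k + 2)), markovMove ι ⟨k, b⟩ ⟨k, a * b * a⁻¹⟩ :=
    fun _ a _ => Or.inl ⟨a, rfl⟩
  rintro ⟨k, b⟩ y hy
  have hδ : SemiconjBy (delta (k + 2)) ((delta (k + 2))⁻¹ * b * delta (k + 2)) b := by
    simp only [SemiconjBy, ← mul_assoc, mul_inv_cancel, one_mul]
  have hconj := semiconjBy_twist_inclusion_shift hι hsh hδ
  rcases hy with ⟨a, rfl⟩ | rfl | rfl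
  · exact .rel _ _ (hr k a b)
  · exact eqvGen_of_semiconjBy_of_rel hr hδ.inv_symm_left (Or.inr (Or.inl rfl))
      ((semiconjBy_twist_bσ hι hsh k).mul_right hconj).inv_symm_left
  · exact eqvGen_of_semiconjBy_of_rel hr hδ.inv_symm_left (Or.inr (Or.inr rfl))
      ((semiconjBy_twist_bσ hι hsh k).inv_right.mul_right hconj).inv_symm_left

end Stabilization

/-- The Markov equivalence `~` (generated by conjugation and right
stabilization) coincides with the equivalence `≅` (generated by conjugation
and left stabilization). -/
theorem markov_eq_mirror
    (ι sh : ∀ k : ℕ, BraidGroup (k + 2) →* BraidGroup (k + 3))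
    (hι : ∀ (k : ℕ) (j : Fin (k + 1)),
      ι k (bσ j) = bσ (Fin.castLE (by omega) j : Fin (k + 3 - 1)))
    (hsh : ∀ (k : ℕ) (j : Fin (k + 1)),
      sh k (bσ j) = bσ (j.succ : Fin (k + 3 - 1))) :
    Relation.EqvGen (markovMove ι) = Relation.EqvGen (mirrorMove sh) := by
  exact le_antisymm (Relation.EqvGen.eqvGen_le (markovMove_le_eqvGen_mirrorMove hι hsh))
    (Relation.EqvGen.eqvGen_le (mirrorMove_le_eqvGen_markovMove hι hsh))
end

section
/- Let S be a model of the link axioms. Then there exists a monoid homomorphism f : B_∞ → S such that f(σ_i) = T₁^{i−1}(σ') for every i ≥ 1, and moreover f ∘ T = T₁ ∘ f, where T is the shift homomorphism of B_∞. -/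
/-- A model of the link axioms: a monoid `S` with a monoid endomorphism `T₁`
and elements `σ'`, `σ̄'` such that `σ'·σ̄' = σ̄'·σ' = 1`,
`σ'·T₁ σ'·σ' = T₁ σ'·σ'·T₁ σ'`, and `σ'` commutes with everything in the image
of `T₁²`. -/
structure LinkModel (S : Type*) [Monoid S] where
  /-- the shift operation -/
  T : S →* S
  /-- the element interpreting the constant `σ` -/
  σ : S
  /-- the element interpreting the constant `σ̄` -/
  σbar : S
  mul_inv : σ * σbar = 1
  inv_mul : σbar * σ = 1
  braid1 : σ * T σ * σ = T σ * σ * T σ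
  braid2 : ∀ s : S, σ * T (T s) = T (T s) * σ

section Aux

variable {S : Type*} [Monoid S] (M : LinkModel S)

lemma iter_map_mul (n : ℕ) (a b : S) :
    (⇑M.T)^[n] (a * b) = (⇑M.T)^[n] a * (⇑M.T)^[n] b := by
  induction n generalizing a b with
  | zero => rfl
  | succ n ih => simp [Function.iterate_succ_apply, map_mul, ih]

lemma iter_map_one (n : ℕ) : (⇑M.T)^[n] (1 : S) = 1 := by
  induction n with
  | zero => rfl
  | succ n ih => simp [Function.iterate_succ_apply, ih]

/-- The unit `T^[i] σ`. -/
def uσ (i : ℕ) : Sˣ :=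
  ⟨(⇑M.T)^[i] M.σ, (⇑M.T)^[i] M.σbar,
    by rw [← iter_map_mul, M.mul_inv, iter_map_one],
    by rw [← iter_map_mul, M.inv_mul, iter_map_one]⟩

lemma uσ_comm (i j : ℕ) (h : i + 2 ≤ j) : uσ M i * uσ M j = uσ M j * uσ M i := by
  obtain ⟨k, rfl⟩ := Nat.exists_eq_add_of_le h
  apply Units.ext
  show (⇑M.T)^[i] M.σ * (⇑M.T)^[i+2+k] M.σ = (⇑M.T)^[i+2+k] M.σ * (⇑M.T)^[i] M.σ
  have h1 : (⇑M.T)^[i+2+k] M.σ = (⇑M.T)^[i] (M.T (M.T ((⇑M.T)^[k] M.σ))) := by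
    have e : i+2+k = i + (2+k) := by ring
    rw [e, Function.iterate_add_apply, Function.iterate_add_apply]
    rfl
  rw [h1, ← iter_map_mul, ← iter_map_mul, M.braid2]

lemma uσ_braid (i : ℕ) :
    uσ M i * uσ M (i+1) * uσ M i = uσ M (i+1) * uσ M i * uσ M (i+1) := by
  apply Units.ext
  have h1 : (⇑M.T)^[i+1] M.σ = (⇑M.T)^[i] (M.T M.σ) := by
    rw [Function.iterate_add_apply]
    rfl
  show (⇑M.T)^[i] M.σ * (⇑M.T)^[i+1] M.σ * (⇑M.T)^[i] M.σ = _
  rw [h1]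
  show _ = (⇑M.T)^[i] (M.T M.σ) * (⇑M.T)^[i] M.σ * (⇑M.T)^[i] (M.T M.σ)
  rw [← iter_map_mul, ← iter_map_mul, ← iter_map_mul, ← iter_map_mul, M.braid1]

lemma rels_hold : ∀ r ∈ braidRelsInf, FreeGroup.lift (uσ M) r = 1 := by
  rintro r (⟨i, j, hij, rfl⟩ | ⟨i, rfl⟩)
  · simp only [map_mul, map_inv, FreeGroup.lift_apply_of]
    rw [uσ_comm M i j hij]
    group
  · simp only [map_mul, map_inv, FreeGroup.lift_apply_of]
    rw [uσ_braid M i]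
    group

end Aux

/-- For every model `S` of the link axioms there is a monoid homomorphism
`f : B_∞ → S` with `f (σ_i) = T₁^{i-1} σ'` for every `i ≥ 1` (0-indexed:
`f (iσ i) = T₁^i σ'`), and `f ∘ T = T₁ ∘ f`, where `T` is the shift of `B_∞`. -/
theorem model_hom_exists {S : Type*} [Monoid S] (M : LinkModel S)
    (T : BInf →* BInf) (hT : ∀ i : ℕ, T (iσ i) = iσ (i + 1)) :
    ∃ f : BInf →* S,
      (∀ i : ℕ, f (iσ i) = (⇑M.T)^[i] M.σ) ∧ ∀ b : BInf, f (T b) = M.T (f b) := by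
  let g : BInf →* Sˣ := PresentedGroup.toGroup (rels_hold M)
  have hg : ∀ i : ℕ, g (iσ i) = uσ M i := fun i => PresentedGroup.toGroup.of _
  have hshift : ∀ b : BInf, g (T b) = Units.map M.T (g b) := by
    have : g.comp T = (Units.map M.T).comp g := by
      apply PresentedGroup.ext
      intro i
      show g (T (iσ i)) = Units.map M.T (g (iσ i))
      rw [hT, hg, hg]
      apply Units.ext
      show (⇑M.T)^[i+1] M.σ = M.T ((⇑M.T)^[i] M.σ)
      rw [Function.iterate_succ_apply']
    intro b
    exact DFunLike.congr_fun this b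
  refine ⟨(Units.coeHom S).comp g, fun i => ?_, fun b => ?_⟩
  · show ((g (iσ i) : Sˣ) : S) = _
    rw [hg]; rfl
  · show ((g (T b) : Sˣ) : S) = M.T ((g b : Sˣ) : S)
    rw [hshift]; rfl
end

section
/- Let S be a model of the link axioms equipped additionally with an equivalence relation ≡' on S satisfying the Markov axioms: (i) for all x, y, z ∈ S, y·z = 1' implies x ≡' y·x·z; (ii) x ≡' σ'·T₁(x) for all x ∈ S; (iii) x ≡' σ̄'·T₁(x) for all x ∈ S. If f : B_∞ → S is a monoid homomorphism with f(σ_i) = T₁^{i−1}(σ') for every i ≥ 1 and f ∘ T = T₁ ∘ f, then f carries ≡ to ≡': for all b_1, b_2 ∈ B_∞, b_1 ≡ b_2 implies f(b_1) ≡' f(b_2). -/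
/-- The generating moves of the relation `≡` on `B_∞` (for the shift `T`):
`a·b·a⁻¹ ≡ b`, `b ≡ σ_1·T b`, and `b ≡ σ_1⁻¹·T b`. -/
def equivMove (T : BInf →* BInf) : BInf → BInf → Prop := fun x y =>
  (∃ a : BInf, x = a * y * a⁻¹) ∨ y = iσ 0 * T x ∨ y = (iσ 0)⁻¹ * T x

/-- If a model of the link axioms also carries an equivalence relation `≡'`
satisfying the Markov axioms, then the canonical homomorphism `f : B_∞ → S`
carries the relation `≡` on `B_∞` to `≡'`. -/
theorem model_hom_preserves_equiv {S : Type*} [Monoid S] (M : LinkModel S)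
    (E : S → S → Prop) (hE : Equivalence E)
    (ax1 : ∀ x y z : S, y * z = 1 → E x (y * x * z))
    (ax2 : ∀ x : S, E x (M.σ * M.T x))
    (ax3 : ∀ x : S, E x (M.σbar * M.T x))
    (T : BInf →* BInf) (hT : ∀ i : ℕ, T (iσ i) = iσ (i + 1))
    (f : BInf →* S)
    (hf : ∀ i : ℕ, f (iσ i) = (⇑M.T)^[i] M.σ)
    (hfT : ∀ b : BInf, f (T b) = M.T (f b)) :
    ∀ b₁ b₂ : BInf, Relation.EqvGen (equivMove T) b₁ b₂ → E (f b₁) (f b₂) := by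
  have hσ : f (iσ 0) = M.σ := by simpa using hf 0
  have hσbar : f ((iσ 0)⁻¹) = M.σbar := by
    have h1 : M.σ * f ((iσ 0)⁻¹) = 1 := by
      rw [← hσ, ← map_mul, mul_inv_cancel, map_one]
    calc f ((iσ 0)⁻¹) = (M.σbar * M.σ) * f ((iσ 0)⁻¹) := by rw [M.inv_mul, one_mul]
      _ = M.σbar * (M.σ * f ((iσ 0)⁻¹)) := by rw [mul_assoc]
      _ = M.σbar := by rw [h1, mul_one]
  intro b₁ b₂ h
  induction h with
  | rel x y hxy =>
    rcases hxy with ⟨a, rfl⟩ | rfl | rfl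
    · have h1 : f a * f a⁻¹ = 1 := by rw [← map_mul, mul_inv_cancel, map_one]
      have := ax1 (f y) (f a) (f a⁻¹) h1
      have heq : f (a * y * a⁻¹) = f a * f y * f a⁻¹ := by simp [map_mul]
      rw [heq]
      exact hE.symm this
    · rw [map_mul, hfT, hσ]; exact ax2 _
    · rw [map_mul, hfT, hσbar]; exact ax3 _
  | refl x => exact hE.refl _
  | symm x y _ ih => exact hE.symm ih
  | trans x y z _ _ ih1 ih2 => exact hE.trans ih1 ih2
end
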